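/- arXiv:2108.07734 — 4 statements merged into one kernel-verified Lean document; each statement's English description precedes it below -/
import Mathlib

section
/- Let G be an edge-coloured multigraph with n colours such that for each colour, the edges of that colour form a disjoint union of non-trivial cliques spanning at least 3n vertices in total. Then G contains a rainbow matching of size at least n - \sqrt{n}. -/
open Finset
open scoped Classical

section Defs

variable {V C E : Type*}

/-- The two endpoints of an edge of a multigraph given by endpoint functions `e₁ e₂`. -/
def edgeEnds [DecidableEq V] (e₁ e₂ : E → V) (e : E) : Finset V := {e₁ e, e₂ e}

/-- A finite set of edges is a matching: all edges are non-loops and pairwise vertex-disjoint. -/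
def IsMatchingE [DecidableEq V] (e₁ e₂ : E → V) (M : Finset E) : Prop :=
  (∀ e ∈ M, e₁ e ≠ e₂ e) ∧
  ∀ a ∈ M, ∀ b ∈ M, a ≠ b → Disjoint (edgeEnds e₁ e₂ a) (edgeEnds e₁ e₂ b)

/-- A set of edges is rainbow: all its edges have pairwise distinct colours. -/
def IsRainbow (col : E → C) (M : Finset E) : Prop := Set.InjOn col ↑M

/-- The colour class of colour `c`: the set of all edges of colour `c`. -/
noncomputable def colourClass [Fintype E] (col : E → C) (c : C) : Finset E :=
  Finset.univ.filter fun e => col e = c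

/-- The set of vertices covered by a set of edges `M`. -/
def matchedVerts [DecidableEq V] (e₁ e₂ : E → V) (M : Finset E) : Finset V :=
  M.biUnion (edgeEnds e₁ e₂)

/-- The set of vertices spanned by the colour class of `c`
(i.e. incident to at least one edge of colour `c`). -/
noncomputable def spannedVerts [Fintype V] [DecidableEq V] [Fintype E]
    (e₁ e₂ : E → V) (col : E → C) (c : C) : Finset V :=
  Finset.univ.filter fun v => ∃ e, col e = c ∧ (e₁ e = v ∨ e₂ e = v)

/-- `u` and `v` are distinct vertices joined by an edge of colour `c`. -/
def adjOfColour (e₁ e₂ : E → V) (col : E → C) (c : C) (u v : V) : Prop :=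
  u ≠ v ∧ ∃ e, col e = c ∧ ((e₁ e = u ∧ e₂ e = v) ∨ (e₁ e = v ∧ e₂ e = u))

/-- The colour class of `c` is a vertex-disjoint union of (non-trivial) cliques:
whenever `uv` and `vw` are edges of colour `c` with `u ≠ w`, also `uw` is an
edge of colour `c`. -/
def IsCliqueUnion (e₁ e₂ : E → V) (col : E → C) (c : C) : Prop :=
  ∀ u v w, adjOfColour e₁ e₂ col c u v → adjOfColour e₁ e₂ col c v w → u ≠ w →
    adjOfColour e₁ e₂ col c u w

end Defs

section Aux

/-!
Take a maximum rainbow matching `M` and let `d = n - |M|`, so at least `d` colours are free.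
For a free colour `c`, no `c`-edge joins two unmatched vertices, and since the colour class is a
union of cliques no vertex has two unmatched `c`-neighbours. Every unmatched vertex spanned by `c`
is therefore the unique unmatched `c`-neighbour of an endpoint of an edge of `M`; as `c` spans at
least `3n` vertices, at least `3d` edges of `M` have distinct unmatched `c`-neighbours at their two
ends. No edge of `M` has this property for three free colours, or it could be swapped for two
edges of free colours. Double counting gives `3d² ≤ 2|M| ≤ 2n`, hence `d ≤ √n`.
-/

section RainbowMatching

variable {V C E : Type*} {e₁ e₂ : E → V} {col : E → C}
  {M N : Finset E} {c c' : C} {f g : E} {u v w w' x : V}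

lemma adjOfColour_symm (h : adjOfColour e₁ e₂ col c u v) : adjOfColour e₁ e₂ col c v u := by
  obtain ⟨hne, e, hce, he⟩ := h
  exact ⟨hne.symm, e, hce, he.symm⟩

variable [DecidableEq V]

lemma mem_matchedVerts : x ∈ matchedVerts e₁ e₂ M ↔ ∃ f ∈ M, x = e₁ f ∨ x = e₂ f := by
  simp [matchedVerts, edgeEnds]

lemma edgeEnds_subset_matchedVerts (hf : f ∈ M) : edgeEnds e₁ e₂ f ⊆ matchedVerts e₁ e₂ M :=
  subset_biUnion_of_mem _ hf

lemma matchedVerts_insert :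
    matchedVerts e₁ e₂ (insert g M) = edgeEnds e₁ e₂ g ∪ matchedVerts e₁ e₂ M :=
  biUnion_insert

lemma matchedVerts_mono (h : N ⊆ M) : matchedVerts e₁ e₂ N ⊆ matchedVerts e₁ e₂ M :=
  biUnion_subset_biUnion_of_subset_left _ h

lemma card_matchedVerts_le : (matchedVerts e₁ e₂ M).card ≤ 2 * M.card := by
  rw [mul_comm]
  exact card_biUnion_le_card_mul _ _ _ fun _ _ => card_le_two

lemma exists_adjOfColour_of_mem_spannedVerts [Fintype V] [Fintype E]
    (hloop : ∀ e, e₁ e ≠ e₂ e) (hv : v ∈ spannedVerts e₁ e₂ col c) :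
    ∃ u, adjOfColour e₁ e₂ col c u v := by
  obtain ⟨e, hec, rfl | rfl⟩ := (mem_filter.mp hv).2
  · exact ⟨e₂ e, (hloop e).symm, e, hec, Or.inr ⟨rfl, rfl⟩⟩
  · exact ⟨e₁ e, hloop e, e, hec, Or.inl ⟨rfl, rfl⟩⟩

lemma IsMatchingE.subset (hM : IsMatchingE e₁ e₂ M) (h : N ⊆ M) : IsMatchingE e₁ e₂ N :=
  ⟨fun e he => hM.1 e (h he), fun a ha b hb hab => hM.2 a (h ha) b (h hb) hab⟩

lemma IsMatchingE.insert (hM : IsMatchingE e₁ e₂ M) (hg : e₁ g ≠ e₂ g)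
    (hdisj : Disjoint (edgeEnds e₁ e₂ g) (matchedVerts e₁ e₂ M)) :
    IsMatchingE e₁ e₂ (insert g M) := by
  have hgM : ∀ b ∈ M, Disjoint (edgeEnds e₁ e₂ g) (edgeEnds e₁ e₂ b) := fun b hb =>
    hdisj.mono_right (edgeEnds_subset_matchedVerts hb)
  refine ⟨forall_mem_insert _ _ _ |>.mpr ⟨hg, hM.1⟩, fun a ha b hb hab => ?_⟩
  rcases mem_insert.mp ha with ha | ha <;> rcases mem_insert.mp hb with hb | hb
  · exact absurd (ha.trans hb.symm) hab
  · exact ha ▸ hgM b hb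
  · exact hb ▸ (hgM a ha).symm
  · exact hM.2 a ha b hb hab

lemma IsMatchingE.disjoint_matchedVerts_erase (hM : IsMatchingE e₁ e₂ M) (hf : f ∈ M) :
    Disjoint (edgeEnds e₁ e₂ f) (matchedVerts e₁ e₂ (M.erase f)) :=
  (disjoint_biUnion_right _ _ _).mpr fun b hb =>
    hM.2 f hf b (mem_of_mem_erase hb) (ne_of_mem_erase hb).symm

def IsFreeColour (col : E → C) (M : Finset E) (c : C) : Prop := ∀ e ∈ M, col e ≠ c

lemma IsFreeColour.mono (hc : IsFreeColour col M c) (h : N ⊆ M) : IsFreeColour col N c :=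
  fun e he => hc e (h he)

lemma isFreeColour_insert :
    IsFreeColour col (insert g M) c ↔ col g ≠ c ∧ IsFreeColour col M c :=
  forall_mem_insert _ _ _

lemma IsRainbow.insert (hR : IsRainbow col M) (hg : IsFreeColour col M (col g)) :
    IsRainbow col (insert g M) := by
  have hgM : g ∉ (M : Set E) := fun h => hg g h rfl
  rw [IsRainbow, coe_insert, Set.injOn_insert hgM]
  exact ⟨hR, fun ⟨e, he, hcol⟩ => hg e he hcol⟩

def IsRainbowMatching (e₁ e₂ : E → V) (col : E → C) (M : Finset E) : Prop :=
  IsMatchingE e₁ e₂ M ∧ IsRainbow col M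

lemma IsRainbowMatching.subset (hM : IsRainbowMatching e₁ e₂ col M) (h : N ⊆ M) :
    IsRainbowMatching e₁ e₂ col N :=
  ⟨hM.1.subset h, hM.2.mono h⟩

lemma IsRainbowMatching.exists_insert (hM : IsRainbowMatching e₁ e₂ col M)
    (hc : IsFreeColour col M c) (huv : adjOfColour e₁ e₂ col c u v)
    (hu : u ∉ matchedVerts e₁ e₂ M) (hv : v ∉ matchedVerts e₁ e₂ M) :
    ∃ g ∉ M, col g = c ∧ edgeEnds e₁ e₂ g = {u, v} ∧
      IsRainbowMatching e₁ e₂ col (insert g M) := by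
  obtain ⟨hne, g, rfl, hg⟩ := huv
  have hends : edgeEnds e₁ e₂ g = {u, v} := by
    rcases hg with ⟨h₁, h₂⟩ | ⟨h₁, h₂⟩ <;> simp [edgeEnds, h₁, h₂, pair_comm]
  have hloop : e₁ g ≠ e₂ g := by
    rcases hg with ⟨h₁, h₂⟩ | ⟨h₁, h₂⟩ <;> rw [h₁, h₂]
    exacts [hne, hne.symm]
  refine ⟨g, fun h => hc g h rfl, rfl, hends, hM.1.insert hloop ?_, hM.2.insert hc⟩
  rw [hends, disjoint_insert_left, disjoint_singleton_left]
  exact ⟨hu, hv⟩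

structure IsMaxRainbowMatching (e₁ e₂ : E → V) (col : E → C) (M : Finset E) : Prop where
  isRainbowMatching : IsRainbowMatching e₁ e₂ col M
  card_le : ∀ N, IsRainbowMatching e₁ e₂ col N → N.card ≤ M.card

lemma exists_isMaxRainbowMatching [Fintype E] (e₁ e₂ : E → V) (col : E → C) :
    ∃ M, IsMaxRainbowMatching e₁ e₂ col M := by
  have hempty : IsRainbowMatching e₁ e₂ col ∅ :=
    ⟨⟨by simp, by simp⟩, by simp [IsRainbow]⟩
  obtain ⟨M, hM, hmax⟩ := (univ.filter (IsRainbowMatching e₁ e₂ col)).exists_max_image card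
    ⟨∅, mem_filter.mpr ⟨mem_univ _, hempty⟩⟩
  exact ⟨M, (mem_filter.mp hM).2, fun N hN => hmax N (mem_filter.mpr ⟨mem_univ _, hN⟩)⟩

namespace IsMaxRainbowMatching

variable (hM : IsMaxRainbowMatching e₁ e₂ col M)
include hM

lemma not_adjOfColour (hc : IsFreeColour col M c)
    (hu : u ∉ matchedVerts e₁ e₂ M) (hv : v ∉ matchedVerts e₁ e₂ M) :
    ¬ adjOfColour e₁ e₂ col c u v := fun huv => by
  obtain ⟨g, hgM, -, -, hins⟩ := hM.isRainbowMatching.exists_insert hc huv hu hv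
  have := hM.card_le _ hins
  rw [card_insert_of_notMem hgM] at this
  omega

lemma eq_of_adjOfColour (hc : IsFreeColour col M c) (hclq : IsCliqueUnion e₁ e₂ col c)
    (hw : w ∉ matchedVerts e₁ e₂ M) (hw' : w' ∉ matchedVerts e₁ e₂ M)
    (h : adjOfColour e₁ e₂ col c x w) (h' : adjOfColour e₁ e₂ col c x w') : w = w' := by
  by_contra hne
  exact hM.not_adjOfColour hc hw hw' (hclq w x w' (adjOfColour_symm h) h' hne)

/-- Otherwise replacing `f` by the two edges `e₁ f — w` and `e₂ f — w'` augments `M`. -/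
lemma eq_of_adjOfColour_of_mem (hc : IsFreeColour col M c) (hc' : IsFreeColour col M c')
    (hcc : c ≠ c') (hf : f ∈ M)
    (hw : w ∉ matchedVerts e₁ e₂ M) (hw' : w' ∉ matchedVerts e₁ e₂ M)
    (h : adjOfColour e₁ e₂ col c (e₁ f) w) (h' : adjOfColour e₁ e₂ col c' (e₂ f) w') :
    w = w' := by
  by_contra hww
  have hMf := hM.isRainbowMatching.subset (erase_subset f M)
  have hdisj := hM.isRainbowMatching.1.disjoint_matchedVerts_erase hf
  have hsub := matchedVerts_mono (e₁ := e₁) (e₂ := e₂) (erase_subset f M)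
  have hf₁ : e₁ f ∈ matchedVerts e₁ e₂ M := mem_matchedVerts.mpr ⟨f, hf, Or.inl rfl⟩
  have hf₂ : e₂ f ∈ matchedVerts e₁ e₂ M := mem_matchedVerts.mpr ⟨f, hf, Or.inr rfl⟩
  obtain ⟨g', hg', hcolg', hendsg', hM₁⟩ := hMf.exists_insert (hc'.mono (erase_subset f M)) h'
    (disjoint_left.mp hdisj (by simp [edgeEnds])) (fun h => hw' (hsub h))
  have hfree : IsFreeColour col (insert g' (M.erase f)) c :=
    isFreeColour_insert.mpr ⟨hcolg' ▸ hcc.symm, hc.mono (erase_subset f M)⟩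
  have hf₁' : e₁ f ∉ matchedVerts e₁ e₂ (insert g' (M.erase f)) := by
    simp only [matchedVerts_insert, hendsg', mem_union, mem_insert, mem_singleton, not_or]
    exact ⟨⟨hM.isRainbowMatching.1.1 f hf, fun h => hw' (h ▸ hf₁)⟩,
      disjoint_left.mp hdisj (by simp [edgeEnds])⟩
  have hw₁ : w ∉ matchedVerts e₁ e₂ (insert g' (M.erase f)) := by
    simp only [matchedVerts_insert, hendsg', mem_union, mem_insert, mem_singleton, not_or]
    exact ⟨⟨fun h => hw (h ▸ hf₂), hww⟩, fun h => hw (hsub h)⟩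
  obtain ⟨g, hg, -, -, hM₂⟩ := hM₁.exists_insert hfree h hf₁' hw₁
  have := hM.card_le _ hM₂
  rw [card_insert_of_notMem hg, card_insert_of_notMem hg', card_erase_of_mem hf] at this
  have := card_pos.mpr ⟨f, hf⟩
  omega

end IsMaxRainbowMatching

end RainbowMatching

section Counting

variable {V C E : Type*} [Fintype V] [DecidableEq V] {e₁ e₂ : E → V} {col : E → C}
  {M : Finset E} {c : C} {f : E}

noncomputable def unmatchedNbrs (e₁ e₂ : E → V) (col : E → C) (M : Finset E) (c : C) (x : V) :
    Finset V :=
  univ.filter fun w => w ∉ matchedVerts e₁ e₂ M ∧ adjOfColour e₁ e₂ col c x w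

lemma mem_unmatchedNbrs {x w : V} : w ∈ unmatchedNbrs e₁ e₂ col M c x ↔
    w ∉ matchedVerts e₁ e₂ M ∧ adjOfColour e₁ e₂ col c x w := by
  simp [unmatchedNbrs]

def IsSplitBy (e₁ e₂ : E → V) (col : E → C) (M : Finset E) (c : C) (f : E) : Prop :=
  ∃ w ∈ unmatchedNbrs e₁ e₂ col M c (e₁ f), ∃ w' ∈ unmatchedNbrs e₁ e₂ col M c (e₂ f), w ≠ w'

noncomputable def freeColours [Fintype C] (col : E → C) (M : Finset E) : Finset C :=
  univ.filter (IsFreeColour col M)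

lemma card_le_card_freeColours_add [Fintype C] :
    Fintype.card C ≤ (freeColours col M).card + M.card := by
  have hsub : (univ : Finset C) ⊆ freeColours col M ∪ M.image col := by
    intro c _
    by_cases hc : IsFreeColour col M c
    · exact mem_union_left _ (mem_filter.mpr ⟨mem_univ c, hc⟩)
    · obtain ⟨e, he, hce⟩ : ∃ e ∈ M, col e = c := by simpa [IsFreeColour] using hc
      exact mem_union_right _ (mem_image.mpr ⟨e, he, hce⟩)
  calc Fintype.card C ≤ (freeColours col M ∪ M.image col).card := card_le_card hsub
    _ ≤ (freeColours col M).card + M.card :=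
        (card_union_le _ _).trans (by gcongr; exact card_image_le)

namespace IsMaxRainbowMatching

variable (hM : IsMaxRainbowMatching e₁ e₂ col M)
include hM

lemma card_union_unmatchedNbrs_le (hc : IsFreeColour col M c)
    (hclq : IsCliqueUnion e₁ e₂ col c) (f : E) :
    (unmatchedNbrs e₁ e₂ col M c (e₁ f) ∪ unmatchedNbrs e₁ e₂ col M c (e₂ f)).card ≤
      1 + if IsSplitBy e₁ e₂ col M c f then 1 else 0 := by
  have hone : ∀ x, (unmatchedNbrs e₁ e₂ col M c x).card ≤ 1 := fun x =>
    card_le_one.mpr fun w hw w' hw' =>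
      hM.eq_of_adjOfColour hc hclq (mem_unmatchedNbrs.mp hw).1 (mem_unmatchedNbrs.mp hw').1
        (mem_unmatchedNbrs.mp hw).2 (mem_unmatchedNbrs.mp hw').2
  split_ifs with hs
  · exact (card_union_le _ _).trans (add_le_add (hone _) (hone _))
  · refine card_le_one.mpr fun w hw w' hw' => ?_
    have hnot : ∀ a ∈ unmatchedNbrs e₁ e₂ col M c (e₁ f),
        ∀ b ∈ unmatchedNbrs e₁ e₂ col M c (e₂ f), a = b :=
      fun a ha b hb => by_contra fun hab => hs ⟨a, ha, b, hb, hab⟩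
    rcases mem_union.mp hw with hw | hw <;> rcases mem_union.mp hw' with hw' | hw'
    · exact card_le_one.mp (hone _) w hw w' hw'
    · exact hnot w hw w' hw'
    · exact (hnot w' hw' w hw).symm
    · exact card_le_one.mp (hone _) w hw w' hw'

lemma card_spannedVerts_le [Fintype E] (hloop : ∀ e, e₁ e ≠ e₂ e)
    (hc : IsFreeColour col M c) (hclq : IsCliqueUnion e₁ e₂ col c) :
    (spannedVerts e₁ e₂ col c).card ≤
      3 * M.card + (M.filter (IsSplitBy e₁ e₂ col M c)).card := by
  set U := M.biUnion fun f =>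
    unmatchedNbrs e₁ e₂ col M c (e₁ f) ∪ unmatchedNbrs e₁ e₂ col M c (e₂ f)
  have hsub : spannedVerts e₁ e₂ col c ⊆ matchedVerts e₁ e₂ M ∪ U := by
    intro w hw
    by_cases hwM : w ∈ matchedVerts e₁ e₂ M
    · exact mem_union_left _ hwM
    obtain ⟨x, hxw⟩ := exists_adjOfColour_of_mem_spannedVerts hloop hw
    have hxM : x ∈ matchedVerts e₁ e₂ M := by
      by_contra hxM
      exact hM.not_adjOfColour hc hxM hwM hxw
    have hwx : w ∈ unmatchedNbrs e₁ e₂ col M c x := mem_unmatchedNbrs.mpr ⟨hwM, hxw⟩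
    obtain ⟨f, hf, rfl | rfl⟩ := mem_matchedVerts.mp hxM
    exacts [mem_union_right _ (mem_biUnion.mpr ⟨f, hf, mem_union_left _ hwx⟩),
      mem_union_right _ (mem_biUnion.mpr ⟨f, hf, mem_union_right _ hwx⟩)]
  have hU : U.card ≤ M.card + (M.filter (IsSplitBy e₁ e₂ col M c)).card :=
    calc U.card ≤ ∑ f ∈ M, (1 + if IsSplitBy e₁ e₂ col M c f then 1 else 0) :=
          card_biUnion_le.trans (sum_le_sum fun f _ => hM.card_union_unmatchedNbrs_le hc hclq f)
      _ = M.card + (M.filter (IsSplitBy e₁ e₂ col M c)).card := by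
          rw [sum_add_distrib, card_filter]; simp
  calc (spannedVerts e₁ e₂ col c).card ≤ (matchedVerts e₁ e₂ M).card + U.card :=
        (card_le_card hsub).trans (card_union_le _ _)
    _ ≤ 3 * M.card + (M.filter (IsSplitBy e₁ e₂ col M c)).card := by
        have := card_matchedVerts_le (e₁ := e₁) (e₂ := e₂) (M := M)
        omega

lemma card_filter_isSplitBy_le_two [Fintype C] (hf : f ∈ M) :
    ((freeColours col M).filter (IsSplitBy e₁ e₂ col M · f)).card ≤ 2 := by
  by_contra! h
  obtain ⟨c₁, hc₁, c₂, hc₂, c₃, hc₃, h₁₂, h₁₃, h₂₃⟩ := two_lt_card.mp h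
  simp only [freeColours, mem_filter, mem_univ, true_and] at hc₁ hc₂ hc₃
  obtain ⟨hfree₁, w₁, hw₁, w₁', hw₁', hne⟩ := hc₁
  obtain ⟨hfree₂, w₂, hw₂, -, -, -⟩ := hc₂
  obtain ⟨hfree₃, -, -, w₃', hw₃', -⟩ := hc₃
  rw [mem_unmatchedNbrs] at hw₁ hw₁' hw₂ hw₃'
  have h₁₃' := hM.eq_of_adjOfColour_of_mem hfree₁ hfree₃ h₁₃ hf hw₁.1 hw₃'.1 hw₁.2 hw₃'.2
  have h₂₃' := hM.eq_of_adjOfColour_of_mem hfree₂ hfree₃ h₂₃ hf hw₂.1 hw₃'.1 hw₂.2 hw₃'.2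
  have h₂₁' := hM.eq_of_adjOfColour_of_mem hfree₂ hfree₁ h₁₂.symm hf hw₂.1 hw₁'.1 hw₂.2 hw₁'.2
  exact hne (h₁₃'.trans (h₂₃'.symm.trans h₂₁'))

lemma three_mul_sq_le [Fintype C] [Fintype E] (hloop : ∀ e, e₁ e ≠ e₂ e)
    (hclique : ∀ c, IsCliqueUnion e₁ e₂ col c)
    (hspan : ∀ c, 3 * Fintype.card C ≤ (spannedVerts e₁ e₂ col c).card) :
    3 * (Fintype.card C - M.card) ^ 2 ≤ 2 * M.card := by
  set d := Fintype.card C - M.card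
  have hcount : (freeColours col M).card * (3 * d) ≤ M.card * 2 := by
    refine card_mul_le_card_mul (fun c f => IsSplitBy e₁ e₂ col M c f) (fun c hc => ?_)
      fun f hf => hM.card_filter_isSplitBy_le_two hf
    have := hM.card_spannedVerts_le hloop (mem_filter.mp hc).2 (hclique c)
    have := hspan c
    exact (show 3 * d ≤ (M.filter (IsSplitBy e₁ e₂ col M c)).card by omega)
  have hd : d ≤ (freeColours col M).card := by
    have := card_le_card_freeColours_add (col := col) (M := M)
    omega
  calc 3 * d ^ 2 = d * (3 * d) := by ring
    _ ≤ (freeColours col M).card * (3 * d) := Nat.mul_le_mul_right _ hd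
    _ ≤ 2 * M.card := by omega

end IsMaxRainbowMatching

end Counting

/-- every `(n, 3n)`-multigraph (each colour class a disjoint union of
non-trivial cliques spanning at least `3n` vertices) contains a rainbow matching
of size at least `n - √n`. -/
theorem stmt_1 {V E : Type*} [Fintype V] [DecidableEq V] [Fintype E]
    (n : ℕ) (e₁ e₂ : E → V) (col : E → Fin n)
    (hloop : ∀ e : E, e₁ e ≠ e₂ e)
    (hclique : ∀ c : Fin n, IsCliqueUnion e₁ e₂ col c)
    (hspan : ∀ c : Fin n, 3 * n ≤ (spannedVerts e₁ e₂ col c).card) :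
    ∃ M : Finset E, IsMatchingE e₁ e₂ M ∧ IsRainbow col M ∧
      (n : ℝ) - Real.sqrt n ≤ M.card := by
  obtain ⟨M, hM⟩ := exists_isMaxRainbowMatching e₁ e₂ col
  obtain ⟨hMatching, hRainbow⟩ := hM.isRainbowMatching
  refine ⟨M, hMatching, hRainbow, ?_⟩
  have hsq_le := hM.three_mul_sq_le hloop hclique (by simpa using hspan)
  rw [Fintype.card_fin] at hsq_le
  have hMn : M.card ≤ n := by
    simpa using card_le_card_of_injOn col (fun _ _ => mem_univ _) hRainbow
  have hsq : ((n - M.card : ℕ) : ℝ) ≤ Real.sqrt n :=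
    Real.le_sqrt_of_sq_le (by exact_mod_cast (show (n - M.card) ^ 2 ≤ n by omega))
  push_cast [hMn] at hsq
  linarith
end Aux
end

section
/- Let M be a maximal matching in a graph G and let c be a colour class of an edge-colouring of G which is a disjoint union of non-trivial cliques. Let A be a subset of V(M) such that no two vertices of A are matched to each other by M, and suppose there is no c-coloured edge contained in (V(G) \ V(M)) \cup A. If the colour class of c spans at least 2|M| + 2m + 2 vertices, then there exist at least 2m + 2 pairwise disjoint c-coloured edges each with one endpoint in V(M) \ (A \cup m(A)) and the other endpoint in (V(G) \ V(M)) \cup A, where m(A) denotes the set of M-partners of vertices of A. -/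
open Finset
open scoped Classical

/-- The set `m(A)` of `M`-partners of vertices of `A`. -/
noncomputable def matchPartners {V E : Type*} [Fintype V] [DecidableEq V]
    (e₁ e₂ : E → V) (M : Finset E) (A : Finset V) : Finset V :=
  Finset.univ.filter fun v =>
    ∃ e ∈ M, (e₁ e ∈ A ∧ e₂ e = v) ∨ (e₂ e ∈ A ∧ e₁ e = v)

/-- Claim 17 of the paper. If `M` is a maximal matching, the colour
class of `c` is a disjoint union of non-trivial cliques spanning at least
`2|M| + 2m + 2` vertices, `A ⊆ V(M)` has no two vertices matched to each other,
and no `c`-edge lies inside `(V ∖ V(M)) ∪ A`, then there are at least `2m + 2`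
pairwise disjoint `c`-edges from `V(M) ∖ (A ∪ m(A))` to `(V ∖ V(M)) ∪ A`. -/
theorem stmt_3 {V C E : Type*} [Fintype V] [DecidableEq V] [Fintype E]
    (e₁ e₂ : E → V) (col : E → C) (M : Finset E) (c : C) (A : Finset V) (m : ℕ)
    (hM : IsMatchingE e₁ e₂ M)
    (hmax : ∀ f : E, IsMatchingE e₁ e₂ (insert f M) → f ∈ M)
    (hclique : IsCliqueUnion e₁ e₂ col c)
    (hA : A ⊆ matchedVerts e₁ e₂ M)
    (hAnomatch : ∀ e ∈ M, ¬ (e₁ e ∈ A ∧ e₂ e ∈ A))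
    (hnoedge : ∀ e : E, col e = c →
      ¬ (e₁ e ∈ (Finset.univ \ matchedVerts e₁ e₂ M) ∪ A ∧
         e₂ e ∈ (Finset.univ \ matchedVerts e₁ e₂ M) ∪ A))
    (hspan : 2 * M.card + 2 * m + 2 ≤ (spannedVerts e₁ e₂ col c).card) :
    ∃ F : Finset E, 2 * m + 2 ≤ F.card ∧ (∀ f ∈ F, col f = c) ∧
      IsMatchingE e₁ e₂ F ∧
      ∀ f ∈ F,
        (e₁ f ∈ matchedVerts e₁ e₂ M \ (A ∪ matchPartners e₁ e₂ M A) ∧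
          e₂ f ∈ (Finset.univ \ matchedVerts e₁ e₂ M) ∪ A) ∨
        (e₂ f ∈ matchedVerts e₁ e₂ M \ (A ∪ matchPartners e₁ e₂ M A) ∧
          e₁ f ∈ (Finset.univ \ matchedVerts e₁ e₂ M) ∪ A) := by
  classical
  set VM := matchedVerts e₁ e₂ M with hVMdef
  set B : Finset V := (Finset.univ \ VM) ∪ A with hBdef
  set S := spannedVerts e₁ e₂ col c with hSdef
  set mA := matchPartners e₁ e₂ M A with hmAdef
  -- cardinality of VM
  have hVMcard : VM.card = 2 * M.card := by
    rw [hVMdef, matchedVerts, Finset.card_biUnion hM.2]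
    have : ∀ a ∈ M, (edgeEnds e₁ e₂ a).card = 2 := by
      intro a ha
      exact Finset.card_pair (hM.1 a ha)
    rw [Finset.sum_congr rfl this, Finset.sum_const, smul_eq_mul, mul_comm]
  -- |mA| ≤ |A|
  have hmAcard : mA.card ≤ A.card := by
    rcases mA.eq_empty_or_nonempty with h | h
    · simp [h]
    obtain ⟨x₀, hx₀⟩ := h
    haveI : Nonempty V := ⟨x₀⟩
    have hx : ∀ x ∈ mA, ∃ a, a ∈ A ∧ ∃ e, e ∈ M ∧
        ((e₁ e = a ∧ e₂ e = x) ∨ (e₂ e = a ∧ e₁ e = x)) := by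
      intro x hxm
      rw [hmAdef, matchPartners, Finset.mem_filter] at hxm
      obtain ⟨-, e, heM, hcase⟩ := hxm
      rcases hcase with ⟨h1, h2⟩ | ⟨h1, h2⟩
      · exact ⟨e₁ e, h1, e, heM, Or.inl ⟨rfl, h2⟩⟩
      · exact ⟨e₂ e, h1, e, heM, Or.inr ⟨rfl, h2⟩⟩
    haveI : Nonempty E := by
      obtain ⟨-, -, e, -, -⟩ := hx x₀ hx₀
      exact ⟨e⟩
    choose! g hgA k hkM hk using hx
    apply Finset.card_le_card_of_injOn g hgA
    intro x hx' x' hx'' heq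
    simp only [Finset.mem_coe] at hx' hx''
    have hkeq : k x = k x' := by
      by_contra hne
      have hdisj := hM.2 _ (hkM x hx') _ (hkM x' hx'') hne
      have hmem : g x ∈ edgeEnds e₁ e₂ (k x) := by
        rcases hk x hx' with ⟨h1, -⟩ | ⟨h1, -⟩
        · rw [edgeEnds, ← h1]; exact Finset.mem_insert_self _ _
        · rw [edgeEnds, ← h1]; exact Finset.mem_insert_of_mem (Finset.mem_singleton_self _)
      have hmem' : g x ∈ edgeEnds e₁ e₂ (k x') := by
        rw [heq]
        rcases hk x' hx'' with ⟨h1, -⟩ | ⟨h1, -⟩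
        · rw [edgeEnds, ← h1]; exact Finset.mem_insert_self _ _
        · rw [edgeEnds, ← h1]; exact Finset.mem_insert_of_mem (Finset.mem_singleton_self _)
      exact (Finset.disjoint_left.mp hdisj hmem) hmem'
    rcases hk x hx' with ⟨h1, h2⟩ | ⟨h1, h2⟩ <;>
      rcases hk x' hx'' with ⟨h1', h2'⟩ | ⟨h1', h2'⟩ <;>
      rw [hkeq] at h1 h2
    · exact h2.symm.trans h2'
    · have ea : x = g x' := h2.symm.trans h1'
      have eb : x' = g x := h2'.symm.trans h1
      exact ea.trans (heq.symm.trans eb.symm)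
    · have ea : x = g x' := h2.symm.trans h1'
      have eb : x' = g x := h2'.symm.trans h1
      exact ea.trans (heq.symm.trans eb.symm)
    · exact h2.symm.trans h2'
  -- every spanned B-vertex has a c-edge to a vertex outside B
  have hSBex : ∀ v ∈ S ∩ B, ∃ e, col e = c ∧
      ((e₁ e = v ∧ e₂ e ∉ B) ∨ (e₂ e = v ∧ e₁ e ∉ B)) := by
    intro v hv
    obtain ⟨hvS, hvB⟩ := Finset.mem_inter.mp hv
    rw [hSdef, spannedVerts, Finset.mem_filter] at hvS
    obtain ⟨-, e, hec, hend⟩ := hvS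
    refine ⟨e, hec, ?_⟩
    have hno := hnoedge e hec
    rcases hend with h1 | h2
    · exact Or.inl ⟨h1, fun hcon => hno ⟨h1 ▸ hvB, hcon⟩⟩
    · exact Or.inr ⟨h2, fun hcon => hno ⟨hcon, h2 ▸ hvB⟩⟩
  -- counting : |S ∩ B| ≥ 2m + 2 + |A|
  have hSBcard : 2 * m + 2 + A.card ≤ (S ∩ B).card := by
    have hsplit : (S ∩ B).card + (S \ B).card = S.card :=
      Finset.card_inter_add_card_sdiff S B
    have hsub : S \ B ⊆ VM \ A := by
      intro x hx
      obtain ⟨hxS, hxB⟩ := Finset.mem_sdiff.mp hx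
      rw [hBdef] at hxB
      simp only [Finset.mem_union, Finset.mem_sdiff, Finset.mem_univ, true_and,
        not_or, not_not] at hxB
      exact Finset.mem_sdiff.mpr ⟨hxB.1, hxB.2⟩
    have h1 : (S \ B).card + A.card ≤ 2 * M.card := by
      have := Finset.card_le_card hsub
      have h2 : (VM \ A).card + A.card = VM.card :=
        Finset.card_sdiff_add_card_eq_card hA
      omega
    omega
  set SB := S ∩ B with hSBdef
  haveI hEne : Nonempty E := by
    have : 0 < SB.card := by omega
    obtain ⟨v, hv⟩ := Finset.card_pos.mp this
    exact ⟨(hSBex v hv).choose⟩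
  choose! f hf using hSBex
  set w : V → V := fun v => if e₁ (f v) = v then e₂ (f v) else e₁ (f v) with hwdef
  have hvB : ∀ v ∈ SB, v ∈ B := fun v hv => (Finset.mem_inter.mp hv).2
  have hw : ∀ v ∈ SB, w v ∉ B ∧
      ((e₁ (f v) = v ∧ e₂ (f v) = w v) ∨ (e₂ (f v) = v ∧ e₁ (f v) = w v)) := by
    intro v hv
    obtain ⟨hc, hcase⟩ := hf v hv
    by_cases h1 : e₁ (f v) = v
    · have hwv : w v = e₂ (f v) := if_pos h1
      rcases hcase with h | h
      · exact ⟨by rw [hwv]; exact h.2, Or.inl ⟨h1, hwv.symm⟩⟩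
      · exact absurd (show e₁ (f v) ∈ B by rw [h1]; exact hvB v hv) h.2
    · have hwv : w v = e₁ (f v) := if_neg h1
      rcases hcase with h | h
      · exact absurd h.1 h1
      · exact ⟨by rw [hwv]; exact h.2, Or.inr ⟨h.1, hwv.symm⟩⟩
  have hvne : ∀ v ∈ SB, v ≠ w v := by
    intro v hv hcon
    exact (hw v hv).1 (hcon ▸ hvB v hv)
  have hadj : ∀ v ∈ SB, adjOfColour e₁ e₂ col c v (w v) := by
    intro v hv
    refine ⟨hvne v hv, f v, (hf v hv).1, ?_⟩
    rcases (hw v hv).2 with h | h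
    · exact Or.inl h
    · exact Or.inr ⟨h.2, h.1⟩
  have hwinj : ∀ v ∈ SB, ∀ v' ∈ SB, v ≠ v' → w v ≠ w v' := by
    intro v hv v' hv' hne heq
    have a1 := hadj v hv
    have a2 := hadj v' hv'
    have a2' : adjOfColour e₁ e₂ col c (w v) v' := by
      obtain ⟨hn, e, hec, hcase⟩ := a2
      exact ⟨heq ▸ hn.symm, e, hec, by rw [← heq] at hcase; tauto⟩
    obtain ⟨hn, e, hec, hcase⟩ := hclique v (w v) v' a1 a2' hne
    apply hnoedge e hec
    rcases hcase with ⟨h1, h2⟩ | ⟨h1, h2⟩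
    · exact ⟨by rw [h1]; exact hvB v hv, by rw [h2]; exact hvB v' hv'⟩
    · exact ⟨by rw [h1]; exact hvB v' hv', by rw [h2]; exact hvB v hv⟩
  -- discard the bad vertices whose partner lies in mA
  set bads := SB.filter (fun v => w v ∈ mA) with hbadsdef
  have hbadcard : bads.card ≤ A.card := by
    refine le_trans (Finset.card_le_card_of_injOn w
      (fun v hv => (Finset.mem_filter.mp hv).2) ?_) hmAcard
    intro v hv v' hv' heq
    by_contra hne
    exact hwinj v (Finset.mem_filter.mp hv).1 v' (Finset.mem_filter.mp hv').1 hne heq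
  set goods := SB \ bads with hgoodsdef
  have hgoodsSB : goods ⊆ SB := Finset.sdiff_subset
  have hgoodscard : 2 * m + 2 ≤ goods.card := by
    have h1 : goods.card = SB.card - bads.card :=
      Finset.card_sdiff_of_subset (Finset.filter_subset _ _)
    have h2 : bads.card ≤ SB.card := Finset.card_le_card (Finset.filter_subset _ _)
    omega
  -- properties of w on SB
  have hwVM : ∀ v ∈ SB, w v ∈ VM ∧ w v ∉ A := by
    intro v hv
    have h := (hw v hv).1
    rw [hBdef] at h
    simp only [Finset.mem_union, Finset.mem_sdiff, Finset.mem_univ, true_and,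
      not_or, not_not] at h
    exact h
  -- injectivity of f on SB
  have hfinj : ∀ v ∈ SB, ∀ v' ∈ SB, f v = f v' → v = v' := by
    intro v hv v' hv' he
    by_contra hne
    obtain ⟨hwB, hcase⟩ := hw v hv
    obtain ⟨hwB', hcase'⟩ := hw v' hv'
    rw [← he] at hcase'
    rcases hcase with ⟨h1, h2⟩ | ⟨h1, h2⟩ <;> rcases hcase' with ⟨h1', h2'⟩ | ⟨h1', h2'⟩
    · exact hne (h1.symm.trans h1')
    · exact hwB' (show w v' ∈ B by rw [← h2', h1]; exact hvB v hv)
    · exact hwB' (show w v' ∈ B by rw [← h2', h1]; exact hvB v hv)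
    · exact hne (h1.symm.trans h1')
  have hends : ∀ v ∈ SB, edgeEnds e₁ e₂ (f v) = {v, w v} := by
    intro v hv
    rcases (hw v hv).2 with ⟨h1, h2⟩ | ⟨h1, h2⟩
    · rw [edgeEnds, h1, h2]
    · rw [edgeEnds, h1, h2, Finset.pair_comm]
  refine ⟨goods.image f, ?_, ?_, ⟨?_, ?_⟩, ?_⟩
  · have hinj : Set.InjOn f ↑goods := by
      intro v hv v' hv' heq
      exact hfinj v (hgoodsSB (Finset.mem_coe.mp hv)) v' (hgoodsSB (Finset.mem_coe.mp hv')) heq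
    rwa [Finset.card_image_of_injOn hinj]
  · intro e he
    obtain ⟨v, hv, rfl⟩ := Finset.mem_image.mp he
    exact (hf v (hgoodsSB hv)).1
  · intro e he
    obtain ⟨v, hv, rfl⟩ := Finset.mem_image.mp he
    have hv' := hgoodsSB hv
    rcases (hw v hv').2 with ⟨h1, h2⟩ | ⟨h1, h2⟩
    · rw [h1, h2]; exact hvne v hv'
    · rw [h1, h2]; exact fun hcon => hvne v hv' hcon.symm
  · intro a ha b hb hab
    obtain ⟨v, hv, rfl⟩ := Finset.mem_image.mp ha
    obtain ⟨v', hv', rfl⟩ := Finset.mem_image.mp hb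
    have hvSB := hgoodsSB hv
    have hvSB' := hgoodsSB hv'
    have hvv' : v ≠ v' := fun h => hab (h ▸ rfl)
    rw [hends v hvSB, hends v' hvSB', Finset.disjoint_left]
    intro x hx hx'
    simp only [Finset.mem_insert, Finset.mem_singleton] at hx hx'
    rcases hx with h | h <;> rcases hx' with h' | h'
    · exact hvv' (h.symm.trans h')
    · exact (hw v' hvSB').1 (by rw [← h', h]; exact hvB v hvSB)
    · exact (hw v hvSB).1 (by rw [← h, h']; exact hvB v' hvSB')
    · exact hwinj v hvSB v' hvSB' hvv' (h.symm.trans h')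
  · intro e he
    obtain ⟨v, hv, rfl⟩ := Finset.mem_image.mp he
    have hvSB := hgoodsSB hv
    have hwmem : w v ∈ VM \ (A ∪ mA) := by
      obtain ⟨hvm, hna⟩ := hwVM v hvSB
      have hnm : w v ∉ mA := (Finset.mem_sdiff.mp hv).2 ∘
        (fun h => Finset.mem_filter.mpr ⟨hvSB, h⟩)
      exact Finset.mem_sdiff.mpr ⟨hvm, fun h => (Finset.mem_union.mp h).elim hna hnm⟩
    rcases (hw v hvSB).2 with ⟨h1, h2⟩ | ⟨h1, h2⟩
    · exact Or.inr ⟨by rw [h2]; exact hwmem, by rw [h1]; exact hvB v hvSB⟩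
    · exact Or.inl ⟨by rw [h2]; exact hwmem, by rw [h1]; exact hvB v hvSB⟩
end

section
/- There is no rainbow matching of size n in the following n-edge-coloured multigraph: take n-1 disjoint triangles, and for every one of the n colours, include a copy of every edge of every triangle in that colour. Hence v(n) > 3n - 3, where v(n) is the minimal v such that every (n,v)-multigraph contains a rainbow matching of size n. -/
open Finset
open scoped Classical

/-- the `n`-edge-coloured multigraph consisting of `n-1` disjoint
triangles, with every edge of every triangle repeated in each of the `n` colours,
is an `(n, 3n-3)`-multigraph with no rainbow matching of size `n`. -/
theorem stmt_5 (n : ℕ) (hn : 1 ≤ n) :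
    let Vt := Fin (n - 1) × Fin 3
    let Et := Fin n × Fin (n - 1) × Fin 3
    let e₁ : Et → Vt := fun e => (e.2.1, e.2.2)
    let e₂ : Et → Vt := fun e => (e.2.1, e.2.2 + 1)
    let col : Et → Fin n := fun e => e.1
    (∀ c : Fin n, IsCliqueUnion e₁ e₂ col c ∧
      (spannedVerts e₁ e₂ col c).card = 3 * (n - 1)) ∧
    ¬ ∃ M : Finset Et, IsMatchingE e₁ e₂ M ∧ IsRainbow col M ∧ M.card = n := by

  intro Vt Et e₁ e₂ col
  have fin3 : ∀ i j : Fin 3, i ≠ j → j = i + 1 ∨ i = j + 1 := by decide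
  constructor
  · intro c
    constructor
    · -- clique union
      intro u v w huv hvw huw
      obtain ⟨hne1, e, hec, hends⟩ := huv
      obtain ⟨hne2, f, hfc, hfends⟩ := hvw
      have h1 : u.1 = v.1 := by
        rcases hends with ⟨h1, h2⟩ | ⟨h1, h2⟩ <;>
          simp only [e₁, e₂] at h1 h2 <;>
          rw [← h1, ← h2]
      have h2 : v.1 = w.1 := by
        rcases hfends with ⟨h1, h2⟩ | ⟨h1, h2⟩ <;>
          simp only [e₁, e₂] at h1 h2 <;>
          rw [← h1, ← h2]
      have h3 : u.1 = w.1 := h1.trans h2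
      have h4 : u.2 ≠ w.2 := by
        intro h
        exact huw (Prod.ext h3 h)
      refine ⟨huw, ?_⟩
      rcases fin3 u.2 w.2 h4 with h | h
      · exact ⟨(c, u.1, u.2), rfl, Or.inl ⟨rfl, by simp only [e₂]; exact Prod.ext h3 h.symm⟩⟩
      · exact ⟨(c, w.1, w.2), rfl, Or.inr ⟨rfl, by simp only [e₂]; exact Prod.ext h3.symm h.symm⟩⟩
    · -- spanned verts
      have : spannedVerts e₁ e₂ col c = Finset.univ := by
        apply Finset.eq_univ_iff_forall.mpr
        intro v
        simp only [spannedVerts, Finset.mem_filter, Finset.mem_univ, true_and]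
        exact ⟨(c, v.1, v.2), rfl, Or.inl rfl⟩
      rw [this]
      simp only [Finset.card_univ, Vt, Fintype.card_prod, Fintype.card_fin]
      ring
  · rintro ⟨M, ⟨hloop, hdisj⟩, hrb, hcard⟩
    have key : ∀ i j : Fin 3, ∃ x : Fin 3,
        (x = i ∨ x = i + 1) ∧ (x = j ∨ x = j + 1) := by decide
    have hinj : Set.InjOn (fun e : Et => e.2.1) ↑M := by
      intro a ha b hb hab
      by_contra hne
      have hab' : a.2.1 = b.2.1 := hab
      have hd := hdisj a ha b hb hne
      obtain ⟨x, hx1, hx2⟩ := key a.2.2 b.2.2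
      have hma : (a.2.1, x) ∈ edgeEnds e₁ e₂ a := by
        simp only [edgeEnds, Finset.mem_insert, Finset.mem_singleton, e₁, e₂]
        rcases hx1 with h | h
        · exact Or.inl (by rw [h])
        · exact Or.inr (by rw [h])
      have hmb : (a.2.1, x) ∈ edgeEnds e₁ e₂ b := by
        simp only [edgeEnds, Finset.mem_insert, Finset.mem_singleton, e₁, e₂]
        rcases hx2 with h | h
        · exact Or.inl (by rw [h, hab'])
        · exact Or.inr (by rw [h, hab'])
      exact (Finset.disjoint_left.mp hd hma) hmb
    have hle : M.card ≤ (Finset.univ : Finset (Fin (n - 1))).card :=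
      Finset.card_le_card_of_injOn (fun e => e.2.1) (fun _ _ => Finset.mem_univ _) hinj
    simp only [Finset.card_univ, Fintype.card_fin] at hle
    omega
end

section
/- Let M be a rainbow matching in an edge-coloured multigraph, C a set of colours, and let (B, M') be a (C, t, r)-block for M with distinguished vertex v. Suppose w_1, ..., w_k are distinct vertices of V(M) \ V(M') and z_1, ..., z_k are distinct vertices of B such that for each i the pair m(w_i) z_i is joined by edges of at least n^{1/10} distinct colours of C. Then (B \cup {w_1,...,w_k}, M' \cup {w_i m(w_i) : i \leq k}) is a (C, t+k, r+2)-block for M. -/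
open Finset
open scoped Classical

section Blocks

variable {V C E : Type*}

/-- The pair `{u, v}` is joined by edges of at least `q` distinct colours of `S`. -/
noncomputable def heavyPair [Fintype E] (e₁ e₂ : E → V) (col : E → C) (S : Finset C)
    (q : ℝ) (u v : V) : Prop :=
  u ≠ v ∧ q ≤ ((S.filter fun c => ∃ e : E, col e = c ∧
    ((e₁ e = u ∧ e₂ e = v) ∨ (e₁ e = v ∧ e₂ e = u))).card : ℝ)

/-- Simple paths alternating between a step relation `P` (matching edges) and a step
relation `Q` (coloured edges), starting with `P` and ending with `Q`; the list is
the list of visited vertices (so the number of edges is its length minus one). -/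
inductive AltPath (P Q : V → V → Prop) : V → V → List V → Prop
  | nil (v : V) : AltPath P Q v v [v]
  | cons {x y z w : V} {l : List V} : P x y → Q y z → x ∉ l → y ∉ l → x ≠ y →
      AltPath P Q z w l → AltPath P Q x w (x :: y :: l)

/-- `a` and `b` are joined by an edge of `M'`. -/
def matchStep [DecidableEq V] (e₁ e₂ : E → V) (M' : Finset E) (a b : V) : Prop :=
  a ≠ b ∧ ∃ e ∈ M', (e₁ e = a ∧ e₂ e = b) ∨ (e₁ e = b ∧ e₂ e = a)

/-- `(B, M')` is a `(S, t, r)`-block for the rainbow matching `M` (with heaviness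
threshold `q`): `B` contains exactly one vertex `v ∉ V(M)`, `M'` is the set of
`M`-edges with an endpoint in `B \ {v}` and has at most `t` edges, and every
`x ∈ B` is joined to `v` by an `M'-C-⋯-M'-C` alternating path of length at most
`r` whose coloured edges are each repeated in at least `q` colours of `S`. -/
noncomputable def IsBlock [Fintype V] [DecidableEq V] [Fintype E]
    (e₁ e₂ : E → V) (col : E → C) (S : Finset C) (q : ℝ) (t r : ℕ)
    (M : Finset E) (B : Finset V) (M' : Finset E) : Prop :=
  M' ⊆ M ∧
  ∃ v ∈ B, v ∉ matchedVerts e₁ e₂ M ∧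
    (∀ x ∈ B, x ≠ v → x ∈ matchedVerts e₁ e₂ M) ∧
    (M' = M.filter fun e => (e₁ e ∈ B ∧ e₁ e ≠ v) ∨ (e₂ e ∈ B ∧ e₂ e ≠ v)) ∧
    M'.card ≤ t ∧
    ∀ x ∈ B, ∃ l : List V,
      AltPath (matchStep e₁ e₂ M') (heavyPair e₁ e₂ col S q) x v l ∧
      l.length ≤ r + 1

end Blocks

section Aux

variable {V E : Type*}

lemma altPath_mono {P P' Q : V → V → Prop} (h : ∀ a b, P a b → P' a b) :
    ∀ {x v : V} {l : List V}, AltPath P Q x v l → AltPath P' Q x v l := by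
  intro x v l hp
  induction hp with
  | nil v => exact .nil v
  | cons hP hQ hx hy hxy _ ih => exact .cons (h _ _ hP) hQ hx hy hxy ih

lemma mem_matchedVerts_of [DecidableEq V] {e₁ e₂ : E → V} {M' : Finset E} {e : E} {u : V}
    (he : e ∈ M') (hu : e₁ e = u ∨ e₂ e = u) : u ∈ matchedVerts e₁ e₂ M' := by
  refine Finset.mem_biUnion.2 ⟨e, he, ?_⟩
  rcases hu with h | h <;> simp [edgeEnds, h.symm]

lemma altPath_mem [DecidableEq V] {e₁ e₂ : E → V} {M' : Finset E}
    {Q : V → V → Prop} {x v : V} {l : List V}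
    (hp : AltPath (matchStep e₁ e₂ M') Q x v l) :
    ∀ u ∈ l, u = v ∨ u ∈ matchedVerts e₁ e₂ M' := by
  induction hp with
  | nil v => intro u hu; left; simpa using hu
  | cons hP hQ _ _ _ _ ih =>
    intro u hu
    obtain ⟨_, e, he, hee⟩ := hP
    rcases List.mem_cons.1 hu with rfl | hu
    · exact Or.inr (mem_matchedVerts_of he (by tauto))
    rcases List.mem_cons.1 hu with rfl | hu
    · exact Or.inr (mem_matchedVerts_of he (by tauto))
    · exact ih u hu

lemma matching_eq_of_shared [DecidableEq V] {e₁ e₂ : E → V} {M : Finset E}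
    (hM : IsMatchingE e₁ e₂ M) {a b : E} {u : V} (ha : a ∈ M) (hb : b ∈ M)
    (hua : u ∈ edgeEnds e₁ e₂ a) (hub : u ∈ edgeEnds e₁ e₂ b) : a = b := by
  by_contra hne
  exact Finset.disjoint_left.1 (hM.2 a ha b hb hne) hua hub

end Aux

/-- Lemma 22 of the paper: extending a `(C, t, r)`-block `(B, M')`
by `k` matching edges `w_i m(w_i)` with `m(w_i) z_i` heavy, `z_i ∈ B`, yields a
`(C, t + k, r + 2)`-block. -/
theorem stmt_12 {V E : Type*} [Fintype V] [DecidableEq V] [Fintype E] [DecidableEq E]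
    (n : ℕ) (e₁ e₂ : E → V) (col : E → Fin n) (S : Finset (Fin n))
    (t r k : ℕ) (M M' : Finset E) (B : Finset V)
    (hM : IsMatchingE e₁ e₂ M) (hR : IsRainbow col M)
    (hB : IsBlock e₁ e₂ col S ((n : ℝ) ^ ((1 : ℝ) / 10)) t r M B M')
    (w z : Fin k → V) (f : Fin k → E)
    (hw : Function.Injective w) (hz : Function.Injective z)
    (hzB : ∀ i, z i ∈ B)
    (hfM : ∀ i, f i ∈ M) (hfM' : ∀ i, f i ∉ M')
    (hfe : ∀ i, e₁ (f i) = w i)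
    (hwM' : ∀ i, w i ∉ matchedVerts e₁ e₂ M')
    (hheavy : ∀ i, heavyPair e₁ e₂ col S ((n : ℝ) ^ ((1 : ℝ) / 10)) (e₂ (f i)) (z i)) :
    IsBlock e₁ e₂ col S ((n : ℝ) ^ ((1 : ℝ) / 10)) (t + k) (r + 2) M
      (B ∪ Finset.image w Finset.univ) (M' ∪ Finset.image f Finset.univ) := by
  obtain ⟨hM'M, v, hvB, hvM, hBmem, hfil, hcard, hpaths⟩ := hB
  set q : ℝ := (n : ℝ) ^ ((1 : ℝ) / 10)
  set M'' : Finset E := M' ∪ Finset.image f Finset.univ with hM''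
  have hM''M : M'' ⊆ M := by
    intro e he
    rcases Finset.mem_union.1 he with h | h
    · exact hM'M h
    · obtain ⟨i, _, rfl⟩ := Finset.mem_image.1 h
      exact hfM i
  have hwiM : ∀ i, w i ∈ matchedVerts e₁ e₂ M :=
    fun i => mem_matchedVerts_of (hfM i) (Or.inl (hfe i))
  have hwiv : ∀ i, w i ≠ v := fun i h => hvM (h ▸ hwiM i)
  have he2M : ∀ i, e₂ (f i) ∈ matchedVerts e₁ e₂ M :=
    fun i => mem_matchedVerts_of (hfM i) (Or.inr rfl)
  have he2v : ∀ i, e₂ (f i) ≠ v := fun i h => hvM (h ▸ he2M i)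
  have he2M' : ∀ i, e₂ (f i) ∉ matchedVerts e₁ e₂ M' := by
    intro i h
    obtain ⟨e, he, hue⟩ := Finset.mem_biUnion.1 h
    have : e = f i := matching_eq_of_shared hM (hM'M he) (hfM i) hue
      (by simp [edgeEnds])
    exact hfM' i (this ▸ he)
  have hstepmono : ∀ a b, matchStep e₁ e₂ M' a b → matchStep e₁ e₂ M'' a b := by
    intro a b ⟨hab, e, he, hee⟩
    exact ⟨hab, e, Finset.mem_union_left _ he, hee⟩
  refine ⟨hM''M, v, Finset.mem_union_left _ hvB, hvM, ?_, ?_, ?_, ?_⟩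
  · intro x hx hxv
    rcases Finset.mem_union.1 hx with h | h
    · exact hBmem x h hxv
    · obtain ⟨i, _, rfl⟩ := Finset.mem_image.1 h
      exact hwiM i
  · ext e
    simp only [hM'', Finset.mem_union, Finset.mem_filter]
    constructor
    · rintro (he | he)
      · have := hfil ▸ he
        obtain ⟨heM, hp⟩ := Finset.mem_filter.1 this
        refine ⟨heM, ?_⟩
        rcases hp with ⟨h1, h2⟩ | ⟨h1, h2⟩
        · exact Or.inl ⟨Or.inl h1, h2⟩
        · exact Or.inr ⟨Or.inl h1, h2⟩
      · obtain ⟨i, _, rfl⟩ := Finset.mem_image.1 he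
        refine ⟨hfM i, Or.inl ⟨?_, ?_⟩⟩
        · rw [hfe i]
          exact Or.inr (Finset.mem_image.2 ⟨i, Finset.mem_univ i, rfl⟩)
        · rw [hfe i]; exact hwiv i
    · rintro ⟨heM, hp⟩
      have key : ∀ u : V, u ∈ edgeEnds e₁ e₂ e → (u ∈ B ∨ u ∈ Finset.image w Finset.univ) →
          u ≠ v → e ∈ M' ∨ e ∈ Finset.image f Finset.univ := by
        intro u hue huB huv
        rcases huB with h | h
        · left
          rw [hfil]
          refine Finset.mem_filter.2 ⟨heM, ?_⟩
          rcases Finset.mem_insert.1 hue with h1 | h1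
          · exact Or.inl ⟨h1 ▸ h, h1 ▸ huv⟩
          · have h1 := Finset.mem_singleton.1 h1
            exact Or.inr ⟨h1 ▸ h, h1 ▸ huv⟩
        · obtain ⟨i, _, rfl⟩ := Finset.mem_image.1 h
          right
          have : e = f i := matching_eq_of_shared hM heM (hfM i) hue
            (by simp [edgeEnds, hfe i])
          exact Finset.mem_image.2 ⟨i, Finset.mem_univ i, this.symm⟩
      rcases hp with ⟨h1, h2⟩ | ⟨h1, h2⟩
      · exact key (e₁ e) (by simp [edgeEnds]) h1 h2
      · exact key (e₂ e) (by simp [edgeEnds]) h1 h2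
  · calc M''.card ≤ M'.card + (Finset.image f Finset.univ).card := Finset.card_union_le _ _
      _ ≤ t + k := by
          have h1 := Finset.card_image_le (s := (Finset.univ : Finset (Fin k))) (f := f)
          simp only [Finset.card_univ, Fintype.card_fin] at h1
          omega
  · intro x hx
    rcases Finset.mem_union.1 hx with h | h
    · obtain ⟨l, hl, hlen⟩ := hpaths x h
      exact ⟨l, altPath_mono hstepmono hl, by omega⟩
    · obtain ⟨i, _, rfl⟩ := Finset.mem_image.1 h
      obtain ⟨l, hl, hlen⟩ := hpaths (z i) (hzB i)
      have hmem := altPath_mem hl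
      have hwl : w i ∉ l := by
        intro hin
        rcases hmem _ hin with h | h
        · exact hwiv i h
        · exact hwM' i h
      have he2l : e₂ (f i) ∉ l := by
        intro hin
        rcases hmem _ hin with h | h
        · exact he2v i h
        · exact he2M' i h
      have hne : w i ≠ e₂ (f i) := (hfe i) ▸ hM.1 (f i) (hfM i)
      refine ⟨w i :: e₂ (f i) :: l, ?_, ?_⟩
      · refine AltPath.cons ?_ (hheavy i) hwl he2l hne (altPath_mono hstepmono hl)
        exact ⟨hne, f i, Finset.mem_union_right _
          (Finset.mem_image.2 ⟨i, Finset.mem_univ i, rfl⟩), Or.inl ⟨hfe i, rfl⟩⟩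
      · simp only [List.length_cons]
        omega
end
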